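/- arXiv:1403.0361 — 2 statements merged into one kernel-verified Lean document; each statement's English description precedes it below -/
import Mathlib

section
/- Under the same hypotheses, the Euclidean norm of ξ_i = δ_p X_i approximates the induced-metric norm of the dynamical vector field: ‖v‖_{g,a_i} := √(g(v,v))|_{a_i} = ‖ξ_i‖/δt + O(δt^p), where g is the metric induced on M by pulling back the ambient inner product through F. -/
/-!
A continuous linear functional commutes with both `deriv` and the finite-difference stencil, so
the scalar accuracy of the scheme applies to every coordinate of `X` in a basis; in finite
dimension this bounds the vector error `deriv X t - δt⁻¹ • ξ`. The reverse triangle inequality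
then transfers the bound to `‖deriv X t‖ - ‖ξ‖ / δt`.
-/

open Filter Finset Topology Asymptotics

variable {E F : Type*} [NormedAddCommGroup E] [NormedSpace ℝ E]
  [NormedAddCommGroup F] [NormedSpace ℝ F]

/-- The unnormalised finite-difference vector `ξ = δ_p X` at time `t` with step `δt`. -/
noncomputable def stencil (w : ℤ → ℝ) (p : ℕ) (X : ℝ → E) (t δt : ℝ) : E :=
  ∑ j ∈ Icc (-(p : ℤ)) p, w j • X (t + j * δt)

def FiniteDiffAccurate (w : ℤ → ℝ) (p : ℕ) : Prop :=
  ∀ f : ℝ → ℝ, ContDiff ℝ (p + 1) f → ∀ t : ℝ,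
    (fun δt : ℝ => deriv f t - (∑ j ∈ Icc (-(p : ℤ)) (p : ℤ), w j * f (t + j * δt)) / δt)
      =O[𝓝[>] 0] fun δt => δt ^ p

theorem ContinuousLinearMap.map_stencil (L : E →L[ℝ] F) (w : ℤ → ℝ) (p : ℕ) (X : ℝ → E)
    (t δt : ℝ) : L (stencil w p X t δt) = stencil w p (fun s => L (X s)) t δt := by
  simp only [stencil, map_sum, map_smul]

theorem ContinuousLinearMap.map_stencil_error {w : ℤ → ℝ} {p : ℕ} {X : ℝ → E} {t : ℝ}
    (hX : DifferentiableAt ℝ X t) (L : E →L[ℝ] ℝ) (δt : ℝ) :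
    L (deriv X t - δt⁻¹ • stencil w p X t δt) =
      deriv (fun s => L (X s)) t -
        (∑ j ∈ Icc (-(p : ℤ)) (p : ℤ), w j * L (X (t + j * δt))) / δt := by
  have hderiv : deriv (fun s => L (X s)) t = L (deriv X t) :=
    (L.hasFDerivAt.comp_hasDerivAt t hX.hasDerivAt).deriv
  rw [map_sub, map_smul, L.map_stencil, hderiv, smul_eq_mul, div_eq_inv_mul]
  rfl

theorem FiniteDiffAccurate.stencil_error_isBigO [FiniteDimensional ℝ E] {w : ℤ → ℝ} {p : ℕ}
    (hacc : FiniteDiffAccurate w p) {X : ℝ → E} (hX : ContDiff ℝ (p + 1) X) (t : ℝ) :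
    (fun δt => deriv X t - δt⁻¹ • stencil w p X t δt) =O[𝓝[>] 0] fun δt => δt ^ p := by
  let coords := (Module.finBasis ℝ E).equivFunL
  refine (coords.isBigO_comp_rev _ _).trans (isBigO_pi.2 fun i => ?_)
  let L : E →L[ℝ] ℝ :=
    (ContinuousLinearMap.proj i : (Fin (Module.finrank ℝ E) → ℝ) →L[ℝ] ℝ).comp
      coords.toContinuousLinearMap
  have hXt : DifferentiableAt ℝ X t := (hX.differentiable (by simp)).differentiableAt
  have hcoord := hacc (fun s => L (X s)) (L.contDiff.comp hX) t
  simp only [← L.map_stencil_error hXt] at hcoord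
  exact hcoord

theorem FiniteDiffAccurate.norm_deriv_sub_norm_stencil_div_isBigO [FiniteDimensional ℝ E]
    {w : ℤ → ℝ} {p : ℕ} (hacc : FiniteDiffAccurate w p) {X : ℝ → E} (hX : ContDiff ℝ (p + 1) X)
    (t : ℝ) :
    (fun δt => ‖deriv X t‖ - ‖stencil w p X t δt‖ / δt) =O[𝓝[>] 0] fun δt => δt ^ p := by
  refine IsBigO.trans ?_ (hacc.stencil_error_isBigO hX t)
  refine IsBigO.of_bound 1 ?_
  filter_upwards [self_mem_nhdsWithin] with δt (hδt : 0 < δt)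
  have hscale : ‖stencil w p X t δt‖ / δt = ‖δt⁻¹ • stencil w p X t δt‖ := by
    rw [norm_smul, norm_inv, Real.norm_of_nonneg hδt.le, div_eq_inv_mul]
  rw [one_mul, Real.norm_eq_abs, hscale]
  exact abs_norm_sub_norm_le _ _

/-- Lemma 1, eq. (7): `‖v‖_{g,a_i} = ‖ξ_i‖/δt + O(δt^p)`.  Here `X t = F (Φ_t a₀)` is the
observed trajectory in data space, so that the induced-metric norm of the dynamical vector
field is `‖v‖_{g,a_i} = ‖DF v‖ = ‖deriv X t_i‖`, and `ξ_i = δ_p X_i` is the finite-difference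
vector with weights `w j`. -/
theorem stmt_1 {n : ℕ} (p : ℕ) (w : ℤ → ℝ)
    (X : ℝ → EuclideanSpace ℝ (Fin n)) (hX : ContDiff ℝ (p + 1) X)
    (hacc : ∀ f : ℝ → ℝ, ContDiff ℝ (p + 1) f → ∀ t : ℝ,
      (fun δt : ℝ => deriv f t - (∑ j ∈ Finset.Icc (-(p : ℤ)) (p : ℤ), w j * f (t + j * δt)) / δt)
        =O[𝓝[>] 0] fun δt => δt ^ p)
    (t : ℝ) :
    (fun δt : ℝ =>
        ‖deriv X t‖ - ‖∑ j ∈ Finset.Icc (-(p : ℤ)) (p : ℤ), w j • X (t + j * δt)‖ / δt)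
      =O[𝓝[>] 0] fun δt => δt ^ p :=
  FiniteDiffAccurate.norm_deriv_sub_norm_stencil_div_isBigO hacc hX t
end

section
/- For two distinct data samples with displacement ω ≠ 0 and velocity vectors ξ_i, ξ_j, the ratio of cone kernels K_{δt,1}(a_i,a_j)/K_{δt,0}(a_i,a_j) = exp(‖ω‖²(1 − C_{ij})/(‖ξ_i‖‖ξ_j‖)) where C_{ij} = [(1−cos²θ_i)(1−cos²θ_j)]^{1/2} ≤ 1, with equality C_{ij} = 1 iff cos θ_i = cos θ_j = 0. In particular the ratio is ≥ 1, and equals 1 iff ω is g-orthogonal to both ξ_i and ξ_j. -/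
open scoped RealInnerProductSpace

/-! The two kernels differ only in the factor multiplying `-‖ω‖² / (‖ξ_i‖ ‖ξ_j‖)` in the
exponent: `1` for `ζ = 0` and `C` for `ζ = 1`, so the ratio is `exp (‖ω‖² (1 - C) / (‖ξ_i‖ ‖ξ_j‖))`.
Cauchy–Schwarz gives `cos² θ ≤ 1`, so both factors `1 - cos² θ` lie in `[0, 1]`; hence `C ≤ 1`,
with equality only when both factors are `1`, i.e. both cosines vanish. -/

lemma inner_div_norm_mul_norm_eq_zero_iff {F : Type*} [NormedAddCommGroup F]
    [InnerProductSpace ℝ F] (x y : F) : ⟪x, y⟫ / (‖x‖ * ‖y‖) = 0 ↔ ⟪x, y⟫ = 0 := by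
  refine div_eq_zero_iff.trans (or_iff_left_of_imp ?_)
  rw [mul_eq_zero, norm_eq_zero, norm_eq_zero]
  rintro (rfl | rfl) <;> simp

lemma one_sub_sq_mul_one_sub_sq_le_one {a b : ℝ} (hb : b ^ 2 ≤ 1) :
    (1 - a ^ 2) * (1 - b ^ 2) ≤ 1 :=
  mul_le_one₀ (by nlinarith [sq_nonneg a]) (by linarith) (by nlinarith [sq_nonneg b])

lemma one_sub_sq_mul_one_sub_sq_eq_one_iff {a b : ℝ} (hb : b ^ 2 ≤ 1) :
    (1 - a ^ 2) * (1 - b ^ 2) = 1 ↔ a = 0 ∧ b = 0 := by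
  constructor
  · intro h
    have hb0 : b ^ 2 = 0 := by
      nlinarith [mul_nonneg (sq_nonneg a) (sub_nonneg.mpr hb), sq_nonneg b]
    have ha0 : a ^ 2 = 0 := by rw [hb0] at h; linarith
    exact ⟨pow_eq_zero_iff two_ne_zero |>.mp ha0, pow_eq_zero_iff two_ne_zero |>.mp hb0⟩
  · rintro ⟨rfl, rfl⟩
    norm_num

lemma exp_neg_mul_div_exp_neg (a s : ℝ) :
    Real.exp (-a * s) / Real.exp (-a) = Real.exp (a * (1 - s)) := by
  rw [← Real.exp_sub]
  ring_nf

theorem stmt_11_general {n : ℕ} (ξi ξj ω : EuclideanSpace ℝ (Fin n))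
    (hξi : ξi ≠ 0) (hξj : ξj ≠ 0) :
    let ci : ℝ := ⟪ξi, ω⟫ / (‖ξi‖ * ‖ω‖)
    let cj : ℝ := ⟪ξj, ω⟫ / (‖ξj‖ * ‖ω‖)
    let K : ℝ → ℝ := fun ζ =>
      Real.exp (-(‖ω‖ ^ 2 / (‖ξi‖ * ‖ξj‖)) * Real.sqrt ((1 - ζ * ci ^ 2) * (1 - ζ * cj ^ 2)))
    let C : ℝ := Real.sqrt ((1 - ci ^ 2) * (1 - cj ^ 2))
    K 1 / K 0 = Real.exp (‖ω‖ ^ 2 * (1 - C) / (‖ξi‖ * ‖ξj‖)) ∧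
    C ≤ 1 ∧ (C = 1 ↔ ci = 0 ∧ cj = 0) ∧
    1 ≤ K 1 / K 0 ∧ (K 1 / K 0 = 1 ↔ ⟪ξi, ω⟫ = 0 ∧ ⟪ξj, ω⟫ = 0) := by
  intro ci cj K C
  have hcj : cj ^ 2 ≤ 1 := sq_le_one_iff_abs_le_one _ |>.mpr
    (abs_real_inner_div_norm_mul_norm_le_one _ _)
  have hC : C ≤ 1 := Real.sqrt_le_one.mpr (one_sub_sq_mul_one_sub_sq_le_one hcj)
  have hC_eq_one : C = 1 ↔ ci = 0 ∧ cj = 0 :=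
    Real.sqrt_eq_one.trans (one_sub_sq_mul_one_sub_sq_eq_one_iff hcj)
  have hratio : K 1 / K 0 = Real.exp (‖ω‖ ^ 2 * (1 - C) / (‖ξi‖ * ‖ξj‖)) := by
    simp only [K, one_mul, zero_mul, sub_zero, mul_one, Real.sqrt_one]
    rw [exp_neg_mul_div_exp_neg, div_mul_eq_mul_div, mul_div_right_comm]
  have hden : ‖ξi‖ * ‖ξj‖ ≠ 0 := by positivity
  refine ⟨hratio, hC, hC_eq_one, ?_, ?_⟩
  · rw [hratio]
    exact Real.one_le_exp (by have := sub_nonneg.mpr hC; positivity)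
  · rw [hratio, Real.exp_eq_one_iff, div_eq_zero_iff, or_iff_left hden, mul_eq_zero, sub_eq_zero,
      eq_comm (a := (1 : ℝ)), hC_eq_one, inner_div_norm_mul_norm_eq_zero_iff, inner_div_norm_mul_norm_eq_zero_iff]
    -- the case `‖ω‖ = 0` is absorbed: then both inner products vanish
    refine or_iff_right_of_imp fun hω => ?_
    rw [pow_eq_zero_iff two_ne_zero, norm_eq_zero] at hω
    simp [hω]

/-- Kernel discrimination ratio (section 2.1): for nonzero `ξ_i, ξ_j, ω`,
`K_{δt,1}/K_{δt,0} = exp(‖ω‖²(1-C)/(‖ξ_i‖‖ξ_j‖))` with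
`C = √((1-cos²θ_i)(1-cos²θ_j)) ≤ 1`; the ratio is `≥ 1`, equal to `1` iff `ω` is
orthogonal to both `ξ_i` and `ξ_j` (equivalently `C = 1` iff `cosθ_i = cosθ_j = 0`). -/
theorem stmt_11 {n : ℕ} (ξi ξj ω : EuclideanSpace ℝ (Fin n))
    (hξi : ξi ≠ 0) (hξj : ξj ≠ 0) (hω : ω ≠ 0) :
    let ci : ℝ := ⟪ξi, ω⟫ / (‖ξi‖ * ‖ω‖)
    let cj : ℝ := ⟪ξj, ω⟫ / (‖ξj‖ * ‖ω‖)
    let K : ℝ → ℝ := fun ζ =>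
      Real.exp (-(‖ω‖ ^ 2 / (‖ξi‖ * ‖ξj‖)) * Real.sqrt ((1 - ζ * ci ^ 2) * (1 - ζ * cj ^ 2)))
    let C : ℝ := Real.sqrt ((1 - ci ^ 2) * (1 - cj ^ 2))
    K 1 / K 0 = Real.exp (‖ω‖ ^ 2 * (1 - C) / (‖ξi‖ * ‖ξj‖)) ∧
    C ≤ 1 ∧ (C = 1 ↔ ci = 0 ∧ cj = 0) ∧
    1 ≤ K 1 / K 0 ∧ (K 1 / K 0 = 1 ↔ ⟪ξi, ω⟫ = 0 ∧ ⟪ξj, ω⟫ = 0) :=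
  stmt_11_general ξi ξj ω hξi hξj
end
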